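/- Let d ≥ 1, let Q be a dyadic cube in ℝ^d, let 1 < r < ∞, let 0 < ε ≤ 1, and let K > 0. Let L be a linear functional defined on dyadic test functions supported on Q such that |L(ρ)| ≤ K‖ρ‖_r for every dyadic test function ρ supported on Q. Let 𝒫 be a collection of pairwise disjoint dyadic cubes contained in Q such that for each P ∈ 𝒫 there exists a nonzero dyadic test function ρ_P supported on P with ∫ ρ_P = 0 and |L(ρ_P)| ≥ K·ε^{−1}·(|P|/|Q|)^{1−1/r}·‖ρ_P‖_r. Then ∑_{P∈𝒫} |P| ≤ ε|Q|. -/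

import Mathlib

/-!
For finitely many of the cubes `P`, test `L` against `g = ∑_P |P|^{1/r} ρ_P / ‖ρ_P‖_r`, the
signs of the `ρ_P` chosen so that `L ρ_P ≥ 0`. The `ρ_P` have disjoint supports, so
`‖g‖_r^r = ∑_P |P| =: S`, while the lower bounds on `L ρ_P` give
`L g ≥ K ε⁻¹ S |Q|^{-(1-1/r)}`. Comparing with `L g ≤ K ‖g‖_r = K S^{1/r}` yields
`S^{1-1/r} ≤ ε |Q|^{1-1/r}`, hence `S ≤ ε^{r'} |Q| ≤ ε |Q|`. The normalisation by `‖ρ_P‖_r` is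
legitimate because a nonzero dyadic test function is constant on some dyadic cube where it
does not vanish.
-/

open MeasureTheory
open scoped ENNReal

noncomputable section

/-- A dyadic cube in `ι → ℝ`: a product of dyadic intervals `[2^m l, 2^m (l+1))`
of equal sidelength. -/
def IsDyadicCube {ι : Type*} [Fintype ι] (P : Set (ι → ℝ)) : Prop :=
  ∃ (m : ℤ) (l : ι → ℤ),
    P = Set.univ.pi fun i => Set.Ico ((2:ℝ) ^ m * (l i : ℝ)) ((2:ℝ) ^ m * ((l i : ℝ) + 1))

/-- A dyadic test function: a finite linear combination of indicators of dyadic cubes. -/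
def IsDyadicTest {ι : Type*} [Fintype ι] (f : (ι → ℝ) → ℝ) : Prop :=
  ∃ (N : ℕ) (c : Fin N → ℝ) (P : Fin N → Set (ι → ℝ)),
    (∀ i, IsDyadicCube (P i)) ∧
    f = fun x => ∑ i, c i * Set.indicator (P i) (fun _ => (1:ℝ)) x

/-- `P'` is a dyadic child of `P`: a dyadic subcube of half the sidelength. -/
def IsDyadicChild {ι : Type*} [Fintype ι] (P' P : Set (ι → ℝ)) : Prop :=
  IsDyadicCube P' ∧ IsDyadicCube P ∧ P' ⊆ P ∧
    volume P = 2 ^ (Fintype.card ι) * volume P'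

/-- The `L^p` norm (valued in `ℝ≥0∞`). -/
def lpNorm {ι : Type*} [Fintype ι] (p : ℝ) (f : (ι → ℝ) → ℝ) : ℝ≥0∞ :=
  eLpNorm f (ENNReal.ofReal p) volume

/-- The `L^p` norm (real-valued). -/
def lpNormR {ι : Type*} [Fintype ι] (p : ℝ) (f : (ι → ℝ) → ℝ) : ℝ :=
  (eLpNorm f (ENNReal.ofReal p) volume).toReal

/-- A Hölder tuple of exponents: `1 < p j < ∞` with `∑ 1/p j = 1`. -/
def IsHolderTuple {n : ℕ} (p : Fin n → ℝ) : Prop :=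
  (∀ j, 1 < p j) ∧ ∑ j, 1 / p j = 1

/-- A perfect `n`-linear Calderón–Zygmund form on `ℝ^d`. -/
structure IsPerfectCZForm (d n : ℕ)
    (Λ : MultilinearMap ℝ (fun _ : Fin n => (Fin d → ℝ) → ℝ) ℝ) : Prop where
  /-- Dyadic decay. -/
  decay : ∀ p : Fin n → ℝ, IsHolderTuple p →
    ∀ P : Set (Fin d → ℝ), IsDyadicCube P →
    ∀ f : Fin n → (Fin d → ℝ) → ℝ,
      (∀ j, IsDyadicTest (f j)) →
      (∀ j, Function.support (f j) ⊆ P) →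
      (∃ i j : Fin n, i ≠ j ∧ ∃ Pi Pj : Set (Fin d → ℝ),
        IsDyadicChild Pi P ∧ IsDyadicChild Pj P ∧ Pi ≠ Pj ∧
        Function.support (f i) ⊆ Pi ∧ Function.support (f j) ⊆ Pj) →
      ENNReal.ofReal |Λ f| ≤ ∏ j, lpNorm (p j) (f j)
  /-- Perfect smoothness. -/
  smooth : ∀ f : Fin n → (Fin d → ℝ) → ℝ, (∀ j, IsDyadicTest (f j)) →
    ∀ P : Set (Fin d → ℝ), IsDyadicCube P →
    ∀ i j : Fin n, i ≠ j →
      Function.support (f j) ⊆ P → (∫ x, f j x) = 0 →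
      (∀ x ∈ P, f i x = 0) → Λ f = 0
  /-- Qualitative truncation: the kernel is a dyadic test function on `ℝ^{dn}`. -/
  trunc : ∃ K : (Fin n × Fin d → ℝ) → ℝ, IsDyadicTest K ∧
    ∀ f : Fin n → (Fin d → ℝ) → ℝ, (∀ j, IsDyadicTest (f j)) →
      Λ f = ∫ x : Fin n × Fin d → ℝ, K x * ∏ j, f j (fun i => x (j, i))

open Set Function

section Dyadic

variable {ι : Type*}

def dyadicCube (m : ℤ) (l : ι → ℤ) : Set (ι → ℝ) :=
  univ.pi fun i => Ico ((2:ℝ) ^ m * (l i : ℝ)) ((2:ℝ) ^ m * ((l i : ℝ) + 1))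

theorem mem_dyadicCube_iff {m : ℤ} {l : ι → ℤ} {x : ι → ℝ} :
    x ∈ dyadicCube m l ↔ ∀ i, ⌊x i / 2 ^ m⌋ = l i := by
  have h2m : (0:ℝ) < 2 ^ m := zpow_pos two_pos m
  simp only [dyadicCube, mem_univ_pi, mem_Ico, Int.floor_eq_iff, le_div_iff₀ h2m,
    div_lt_iff₀ h2m, mul_comm]

theorem floor_div_two_zpow_congr {x y : ℝ} {m m' : ℤ} (hm : m ≤ m')
    (h : ⌊x / 2 ^ m⌋ = ⌊y / 2 ^ m⌋) : ⌊x / 2 ^ m'⌋ = ⌊y / 2 ^ m'⌋ := by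
  obtain ⟨k, rfl⟩ : ∃ k : ℕ, m' = m + k := ⟨(m' - m).toNat, by omega⟩
  have hdiv : ∀ z : ℝ, z / 2 ^ (m + k : ℤ) = z / 2 ^ m / ((2 ^ k : ℕ) : ℝ) := fun z => by
    rw [zpow_add₀ two_ne_zero, zpow_natCast, div_div, Nat.cast_pow, Nat.cast_ofNat]
  rw [hdiv, hdiv, Int.floor_div_natCast, Int.floor_div_natCast, h]

theorem mem_dyadicCube_congr {m m' : ℤ} (hm : m ≤ m') (l : ι → ℤ) {x y : ι → ℝ}
    (h : ∀ i, ⌊x i / 2 ^ m⌋ = ⌊y i / 2 ^ m⌋) : x ∈ dyadicCube m' l ↔ y ∈ dyadicCube m' l := by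
  simp only [mem_dyadicCube_iff, floor_div_two_zpow_congr hm (h _)]

variable [Fintype ι]

namespace IsDyadicCube

variable {P : Set (ι → ℝ)}

theorem measurableSet (hP : IsDyadicCube P) : MeasurableSet P := by
  obtain ⟨m, l, rfl⟩ := hP
  exact .univ_pi fun _ => measurableSet_Ico

theorem volume_eq (hP : IsDyadicCube P) :
    ∃ m : ℤ, volume P = ENNReal.ofReal (2 ^ m) ^ Fintype.card ι := by
  obtain ⟨m, l, rfl⟩ := hP
  refine ⟨m, ?_⟩
  simp only [volume_pi_pi, Real.volume_Ico, mul_add, mul_one, add_sub_cancel_left,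
    Finset.prod_const, Finset.card_univ]

theorem volume_pos (hP : IsDyadicCube P) : 0 < volume P := by
  obtain ⟨m, hm⟩ := hP.volume_eq
  rw [hm]
  exact ENNReal.pow_pos (ENNReal.ofReal_pos.2 (zpow_pos two_pos m)) _

theorem volume_ne_top (hP : IsDyadicCube P) : volume P ≠ ∞ := by
  obtain ⟨m, hm⟩ := hP.volume_eq
  rw [hm]
  exact ENNReal.pow_ne_top ENNReal.ofReal_ne_top

end IsDyadicCube

namespace IsDyadicTest

variable {f g : (ι → ℝ) → ℝ}

theorem zero : IsDyadicTest (0 : (ι → ℝ) → ℝ) :=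
  ⟨0, Fin.elim0, Fin.elim0, fun i => i.elim0, by funext x; simp⟩

theorem add (hf : IsDyadicTest f) (hg : IsDyadicTest g) : IsDyadicTest (f + g) := by
  obtain ⟨N₁, c₁, P₁, hP₁, rfl⟩ := hf
  obtain ⟨N₂, c₂, P₂, hP₂, rfl⟩ := hg
  refine ⟨N₁ + N₂, Fin.append c₁ c₂, Fin.append P₁ P₂, fun i => ?_, ?_⟩
  · refine Fin.addCases (fun j => ?_) (fun j => ?_) i
    · simpa only [Fin.append_left] using hP₁ j
    · simpa only [Fin.append_right] using hP₂ j
  · funext x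
    simp only [Pi.add_apply, Fin.sum_univ_add, Fin.append_left, Fin.append_right]

theorem const_smul (hf : IsDyadicTest f) (c : ℝ) : IsDyadicTest (c • f) := by
  obtain ⟨N, a, P, hP, rfl⟩ := hf
  refine ⟨N, fun i => c * a i, P, hP, ?_⟩
  funext x
  simp only [Pi.smul_apply, smul_eq_mul, Finset.mul_sum, mul_assoc]

theorem neg (hf : IsDyadicTest f) : IsDyadicTest (-f) := by
  simpa using hf.const_smul (-1)

theorem finsetSum {κ : Type*} (s : Finset κ) {f : κ → (ι → ℝ) → ℝ}
    (hf : ∀ i ∈ s, IsDyadicTest (f i)) : IsDyadicTest (∑ i ∈ s, f i) := by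
  classical
  induction s using Finset.induction_on with
  | empty => simpa using zero
  | insert i s hi ih =>
    rw [Finset.sum_insert hi]
    exact (hf i (s.mem_insert_self i)).add (ih fun j hj => hf j (Finset.mem_insert_of_mem hj))

theorem memLp (hf : IsDyadicTest f) (p : ℝ≥0∞) : MemLp f p volume := by
  obtain ⟨N, c, P, hP, rfl⟩ := hf
  exact memLp_finsetSum _ fun i _ =>
    (memLp_indicator_const p (hP i).measurableSet 1 (Or.inr (hP i).volume_ne_top)).const_mul (c i)

/-- A dyadic test function is constant on the cube of the finest scale occurring in it. -/
theorem exists_isDyadicCube_forall_eq (hf : IsDyadicTest f) (x : ι → ℝ) :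
    ∃ C, IsDyadicCube C ∧ x ∈ C ∧ ∀ y ∈ C, f y = f x := by
  obtain ⟨N, c, P, hP, rfl⟩ := hf
  choose mP lP hPe using hP
  obtain ⟨m, hm⟩ := Finite.exists_ge mP
  refine ⟨dyadicCube m fun i => ⌊x i / 2 ^ m⌋, ⟨m, _, rfl⟩, mem_dyadicCube_iff.2 fun _ => rfl,
    fun y hy => ?_⟩
  have hmem : ∀ k, y ∈ P k ↔ x ∈ P k := fun k => by
    rw [hPe k]
    exact mem_dyadicCube_congr (hm k) _ (mem_dyadicCube_iff.1 hy)
  refine Finset.sum_congr rfl fun k _ => ?_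
  by_cases hx : x ∈ P k
  · rw [indicator_of_mem hx, indicator_of_mem ((hmem k).2 hx)]
  · rw [indicator_of_notMem hx, indicator_of_notMem (mt (hmem k).1 hx)]

theorem lpNormR_pos (hf : IsDyadicTest f) (hf0 : f ≠ 0) {r : ℝ} (hr : 0 < r) :
    0 < lpNormR r f := by
  have hmem := hf.memLp (ENNReal.ofReal r)
  refine ENNReal.toReal_pos (fun h0 => ?_) hmem.eLpNorm_ne_top
  have hae : f =ᵐ[volume] 0 :=
    (eLpNorm_eq_zero_iff hmem.aestronglyMeasurable (ENNReal.ofReal_pos.2 hr).ne').1 h0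
  obtain ⟨x, hx⟩ := Function.ne_iff.1 hf0
  obtain ⟨C, hC, -, hCf⟩ := hf.exists_isDyadicCube_forall_eq x
  have hCsub : C ⊆ {y | f y ≠ 0} := fun y hy => by simpa [hCf y hy] using hx
  exact hC.volume_pos.ne' (measure_mono_null hCsub (ae_iff.1 hae))

end IsDyadicTest

end Dyadic

theorem Finset.apply_sum_of_pairwise_disjoint_support {κ α M N : Type*} [AddCommMonoid M]
    [AddCommMonoid N] {g : M → N} (hg : g 0 = 0) {s : Finset κ} {f : κ → α → M}
    (hd : (s : Set κ).Pairwise (Disjoint on fun i => support (f i))) (x : α) :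
    g (∑ i ∈ s, f i x) = ∑ i ∈ s, g (f i x) := by
  by_cases hx : ∃ j ∈ s, f j x ≠ 0
  · obtain ⟨j, hj, hjx⟩ := hx
    have hzero : ∀ i ∈ s, i ≠ j → f i x = 0 := fun i hi hij => by
      by_contra hix
      exact (hd hi hj hij).notMem_of_mem_left hix hjx
    rw [Finset.sum_eq_single_of_mem j hj hzero, Finset.sum_eq_single_of_mem j hj
      fun i hi hij => by rw [hzero i hi hij, hg]]
  · push Not at hx
    rw [Finset.sum_eq_zero hx, hg, Finset.sum_eq_zero fun i hi => by rw [hx i hi, hg]]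

theorem MeasureTheory.eLpNorm'_rpow_finsetSum_of_pairwise_disjoint {κ α E : Type*}
    [MeasurableSpace α] {μ : Measure α} [NormedAddCommGroup E] {q : ℝ} (hq : 0 < q)
    {s : Finset κ} {f : κ → α → E} (hf : ∀ i ∈ s, AEStronglyMeasurable (f i) μ)
    (hd : (s : Set κ).Pairwise (Disjoint on fun i => support (f i))) :
    eLpNorm' (∑ i ∈ s, f i) q μ ^ q = ∑ i ∈ s, eLpNorm' (f i) q μ ^ q := by
  simp only [← lintegral_rpow_enorm_eq_rpow_eLpNorm' hq, Finset.sum_apply,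
    Finset.apply_sum_of_pairwise_disjoint_support (g := fun y : E => ‖y‖ₑ ^ q)
      (by simp [ENNReal.zero_rpow_of_pos hq]) hd]
  exact lintegral_finsetSum' s fun i hi => (hf i hi).enorm.pow_const q

section lpNormR

variable {ι : Type*} [Fintype ι] {r : ℝ}

theorem lpNormR_nonneg (r : ℝ) (f : (ι → ℝ) → ℝ) : 0 ≤ lpNormR r f :=
  ENNReal.toReal_nonneg

theorem lpNormR_eq_toReal_eLpNorm' (hr : 0 < r) (f : (ι → ℝ) → ℝ) :
    lpNormR r f = (eLpNorm' f r volume).toReal := by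
  rw [lpNormR, eLpNorm_eq_eLpNorm' (ENNReal.ofReal_pos.2 hr).ne' ENNReal.ofReal_ne_top,
    ENNReal.toReal_ofReal hr.le]

theorem lpNormR_const_smul (r c : ℝ) (f : (ι → ℝ) → ℝ) :
    lpNormR r (c • f) = |c| * lpNormR r f := by
  rw [lpNormR, eLpNorm_const_smul, ENNReal.toReal_mul, toReal_enorm, Real.norm_eq_abs, lpNormR]

theorem lpNormR_neg (r : ℝ) (f : (ι → ℝ) → ℝ) : lpNormR r (-f) = lpNormR r f := by
  rw [lpNormR, eLpNorm_neg, lpNormR]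

theorem lpNormR_rpow_finsetSum_of_pairwise_disjoint (hr : 0 < r) {κ : Type*} {s : Finset κ}
    {f : κ → (ι → ℝ) → ℝ} (hf : ∀ i ∈ s, MemLp (f i) (ENNReal.ofReal r) volume)
    (hd : (s : Set κ).Pairwise (Disjoint on fun i => support (f i))) :
    lpNormR r (∑ i ∈ s, f i) ^ r = ∑ i ∈ s, lpNormR r (f i) ^ r := by
  have hfin : ∀ i ∈ s, eLpNorm' (f i) r volume ^ r ≠ ∞ := fun i hi => by
    have := (hf i hi).eLpNorm_ne_top
    rw [eLpNorm_eq_eLpNorm' (ENNReal.ofReal_pos.2 hr).ne' ENNReal.ofReal_ne_top,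
      ENNReal.toReal_ofReal hr.le] at this
    exact ENNReal.rpow_ne_top_of_nonneg hr.le this
  rw [lpNormR_eq_toReal_eLpNorm' hr, ENNReal.toReal_rpow,
    eLpNorm'_rpow_finsetSum_of_pairwise_disjoint hr (fun i hi => (hf i hi).1) hd,
    ENNReal.toReal_sum hfin]
  simp only [lpNormR_eq_toReal_eLpNorm' hr, ENNReal.toReal_rpow]

theorem lpNormR_sum_normalized (hr : 0 < r) {κ : Type*} {s : Finset κ} {v : κ → ℝ}
    (hv : ∀ i, 0 ≤ v i) {f : κ → (ι → ℝ) → ℝ}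
    (hf : ∀ i ∈ s, MemLp (f i) (ENNReal.ofReal r) volume) (hf0 : ∀ i ∈ s, 0 < lpNormR r (f i))
    (hd : (s : Set κ).Pairwise (Disjoint on fun i => support (f i))) :
    lpNormR r (∑ i ∈ s, (v i ^ (1 / r) / lpNormR r (f i)) • f i) = (∑ i ∈ s, v i) ^ (1 / r) := by
  have hpow : lpNormR r (∑ i ∈ s, (v i ^ (1 / r) / lpNormR r (f i)) • f i) ^ r = ∑ i ∈ s, v i := by
    rw [lpNormR_rpow_finsetSum_of_pairwise_disjoint hr (fun i hi => (hf i hi).const_smul _)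
      fun i hi j hj hij => (hd hi hj hij).mono (support_const_smul_subset _ _)
        (support_const_smul_subset _ _)]
    refine Finset.sum_congr rfl fun i hi => ?_
    rw [lpNormR_const_smul, abs_div, abs_of_nonneg (Real.rpow_nonneg (hv i) _),
      abs_of_pos (hf0 i hi), div_mul_cancel₀ _ (hf0 i hi).ne', ← Real.rpow_mul (hv i),
      one_div_mul_cancel hr.ne', Real.rpow_one]
  rw [← hpow, ← Real.rpow_mul (lpNormR_nonneg r _), mul_one_div_cancel hr.ne', Real.rpow_one]

end lpNormR

theorem IsDyadicTest.exists_apply_eq_abs {ι : Type*} [Fintype ι] {f : (ι → ℝ) → ℝ}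
    (hf : IsDyadicTest f) (L : ((ι → ℝ) → ℝ) →ₗ[ℝ] ℝ) (r : ℝ) :
    ∃ g, IsDyadicTest g ∧ support g = support f ∧ lpNormR r g = lpNormR r f ∧ L g = |L f| := by
  rcases abs_choice (L f) with h | h
  · exact ⟨f, hf, rfl, rfl, h.symm⟩
  · exact ⟨-f, hf.neg, support_neg f, lpNormR_neg r f, by rw [map_neg, h]⟩

theorem Real.le_mul_of_le_mul_rpow_mul_rpow {S V ε s : ℝ} (hS : 0 ≤ S) (hV : 0 ≤ V)
    (hε0 : 0 ≤ ε) (hε1 : ε ≤ 1) (hs0 : 0 ≤ s) (hs1 : s < 1) (h : S ≤ ε * (S ^ s * V ^ (1 - s))) :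
    S ≤ ε * V := by
  rcases hS.eq_or_lt with rfl | hS
  · positivity
  have ht : 0 < 1 - s := by linarith
  have hSs : 0 < S ^ s := Real.rpow_pos_of_pos hS s
  have hSt : S ^ (1 - s) ≤ ε * V ^ (1 - s) := by
    rw [Real.rpow_sub hS, Real.rpow_one, div_le_iff₀ hSs]
    linarith
  have hεt : ε ≤ ε ^ (1 - s) := Real.self_le_rpow_of_le_one hε0 hε1 (by linarith)
  refine (Real.rpow_le_rpow_iff hS.le (by positivity) ht).1 ?_
  calc S ^ (1 - s) ≤ ε * V ^ (1 - s) := hSt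
    _ ≤ ε ^ (1 - s) * V ^ (1 - s) := by gcongr
    _ = (ε * V) ^ (1 - s) := (Real.mul_rpow hε0 hV).symm

theorem sum_toReal_volume_le_of_le_apply {ι κ : Type*} [Fintype ι] {Q : Set (ι → ℝ)} {r ε K : ℝ}
    (hQ : 0 < (volume Q).toReal) (hr : 1 < r) (hε0 : 0 < ε) (hε1 : ε ≤ 1) (hK : 0 < K)
    {L : ((ι → ℝ) → ℝ) →ₗ[ℝ] ℝ}
    (hL : ∀ ρ, IsDyadicTest ρ → support ρ ⊆ Q → |L ρ| ≤ K * lpNormR r ρ)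
    {s : Finset κ} {P : κ → Set (ι → ℝ)} (hPQ : ∀ i ∈ s, P i ⊆ Q)
    (hPd : (s : Set κ).Pairwise (Disjoint on P)) {ρ : κ → (ι → ℝ) → ℝ}
    (hρ : ∀ i ∈ s, IsDyadicTest (ρ i)) (hρP : ∀ i ∈ s, support (ρ i) ⊆ P i)
    (hρ0 : ∀ i ∈ s, 0 < lpNormR r (ρ i))
    (hρL : ∀ i ∈ s, K * ε⁻¹ * ((volume (P i)).toReal / (volume Q).toReal) ^ (1 - 1 / r) *
      lpNormR r (ρ i) ≤ L (ρ i)) :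
    ∑ i ∈ s, (volume (P i)).toReal ≤ ε * (volume Q).toReal := by
  set V := (volume Q).toReal
  set v : κ → ℝ := fun i => (volume (P i)).toReal
  set S := ∑ i ∈ s, v i
  have hr0 : 0 < r := by linarith
  have hv : ∀ i, 0 ≤ v i := fun i => ENNReal.toReal_nonneg
  set c : κ → ℝ := fun i => v i ^ (1 / r) / lpNormR r (ρ i) with hc
  have hc0 : ∀ i, 0 ≤ c i := fun i => div_nonneg (Real.rpow_nonneg (hv i) _) (lpNormR_nonneg r _)
  set g := ∑ i ∈ s, c i • ρ i
  have hsupp : ∀ i ∈ s, support (c i • ρ i) ⊆ P i := fun i hi =>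
    (support_const_smul_subset _ _).trans (hρP i hi)
  have hg : IsDyadicTest g := IsDyadicTest.finsetSum s fun i hi => (hρ i hi).const_smul _
  have hgQ : support g ⊆ Q := by
    simp only [g, Finset.sum_fn]
    exact (Finset.support_sum _ _).trans (iUnion₂_subset fun i hi => (hsupp i hi).trans (hPQ i hi))
  have hg_norm : lpNormR r g = S ^ (1 / r) :=
    lpNormR_sum_normalized hr0 hv (fun i hi => (hρ i hi).memLp _) hρ0
      fun i hi j hj hij => (hPd hi hj hij).mono (hρP i hi) (hρP j hj)
  have hg_lower : K * (ε⁻¹ * S / V ^ (1 - 1 / r)) ≤ L g := by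
    rw [map_sum, Finset.mul_sum, Finset.sum_div, Finset.mul_sum]
    refine Finset.sum_le_sum fun i hi => ?_
    have hvV : v i ^ (1 / r) * (v i / V) ^ (1 - 1 / r) = v i / V ^ (1 - 1 / r) := by
      rw [Real.div_rpow (hv i) hQ.le, mul_div_assoc', ← Real.rpow_add' (hv i) (by norm_num),
        add_sub_cancel, Real.rpow_one]
    calc K * (ε⁻¹ * v i / V ^ (1 - 1 / r))
        = c i * (K * ε⁻¹ * (v i / V) ^ (1 - 1 / r) * lpNormR r (ρ i)) := by
          rw [hc, mul_div_assoc, ← hvV]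
          field_simp [(hρ0 i hi).ne']
      _ ≤ c i * L (ρ i) := mul_le_mul_of_nonneg_left (hρL i hi) (hc0 i)
      _ = L (c i • ρ i) := (L.map_smul _ _).symm
  have hg_upper : L g ≤ K * S ^ (1 / r) := hg_norm ▸ (le_abs_self _).trans (hL g hg hgQ)
  have hS : S ≤ ε * (S ^ (1 / r) * V ^ (1 - 1 / r)) := by
    have := le_of_mul_le_mul_left (hg_lower.trans hg_upper) hK
    rwa [div_le_iff₀ (by positivity), inv_mul_le_iff₀ hε0] at this
  exact Real.le_mul_of_le_mul_rpow_mul_rpow (Finset.sum_nonneg fun i _ => hv i) hQ.le hε0.le hε1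
    (by positivity) ((div_lt_one hr0).2 hr) hS

theorem stopping_time_dual_general (d : ℕ)
    (Q : Set (Fin d → ℝ)) (hQ : IsDyadicCube Q)
    (r : ℝ) (hr1 : 1 < r)
    (ε : ℝ) (hε0 : 0 < ε) (hε1 : ε ≤ 1)
    (K : ℝ) (hK : 0 < K)
    (L : ((Fin d → ℝ) → ℝ) →ₗ[ℝ] ℝ)
    (hL : ∀ ρ : (Fin d → ℝ) → ℝ, IsDyadicTest ρ → Function.support ρ ⊆ Q →
      |L ρ| ≤ K * lpNormR r ρ)
    (Pc : Set (Set (Fin d → ℝ)))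
    (hPc_cube : ∀ P ∈ Pc, IsDyadicCube P ∧ P ⊆ Q)
    (hPc_disj : Pc.Pairwise fun A B => Disjoint A B)
    (hPc_test : ∀ P ∈ Pc, ∃ ρ : (Fin d → ℝ) → ℝ, ρ ≠ 0 ∧ IsDyadicTest ρ ∧
      Function.support ρ ⊆ P ∧ (∫ x, ρ x) = 0 ∧
      K * ε⁻¹ * (((volume P).toReal / (volume Q).toReal) ^ (1 - 1 / r)) * lpNormR r ρ ≤
        |L ρ|) :
    ∑' P : Pc, volume (P : Set (Fin d → ℝ)) ≤ ENNReal.ofReal ε * volume Q := by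
  have hρ : ∀ P : Pc, ∃ ρ, IsDyadicTest ρ ∧ support ρ ⊆ P ∧ 0 < lpNormR r ρ ∧
      K * ε⁻¹ * ((volume (P : Set (Fin d → ℝ))).toReal / (volume Q).toReal) ^ (1 - 1 / r) *
        lpNormR r ρ ≤ L ρ := fun P => by
    obtain ⟨ρ, hρ0, hρ, hρP, -, hρL⟩ := hPc_test P P.2
    obtain ⟨σ, hσ, hσρ, hσn, hσL⟩ := hρ.exists_apply_eq_abs L r
    exact ⟨σ, hσ, hσρ ▸ hρP, hσn ▸ hρ.lpNormR_pos hρ0 (by linarith), by rwa [hσn, hσL]⟩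
  choose ρ hρ hρP hρ0 hρL using hρ
  have hfin : ∀ P : Pc, volume (P : Set (Fin d → ℝ)) ≠ ∞ := fun P =>
    (hPc_cube P P.2).1.volume_ne_top
  refine ENNReal.summable.tsum_le_of_sum_le fun s => ?_
  have hsum := sum_toReal_volume_le_of_le_apply (s := s)
    (ENNReal.toReal_pos hQ.volume_pos.ne' hQ.volume_ne_top) hr1 hε0 hε1 hK hL
    (fun P _ => (hPc_cube P P.2).2)
    (fun P _ P' _ h => hPc_disj P.2 P'.2 (Subtype.coe_injective.ne h))
    (fun P _ => hρ P) (fun P _ => hρP P) (fun P _ => hρ0 P) (fun P _ => hρL P)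
  rw [← ENNReal.ofReal_toReal (ENNReal.sum_ne_top.2 fun P _ => hfin P),
    ENNReal.toReal_sum fun P _ => hfin P, ← ENNReal.ofReal_toReal hQ.volume_ne_top,
    ← ENNReal.ofReal_mul hε0.le]
  exact ENNReal.ofReal_le_ofReal hsum

/-- The stopping-time estimate corresponding to `Pc₃`: if a linear functional `L` is
bounded by `K ‖·‖_r` on dyadic test functions supported on `Q`, and `Pc` is a pairwise
disjoint collection of dyadic cubes `P ⊆ Q` each carrying a nonzero mean-zero test
function `ρ_P` with `|L ρ_P| ≥ K ε⁻¹ (|P|/|Q|)^{1-1/r} ‖ρ_P‖_r`, then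
`∑_{P ∈ Pc} |P| ≤ ε |Q|`. -/
theorem stopping_time_dual (d : ℕ) (hd : 1 ≤ d)
    (Q : Set (Fin d → ℝ)) (hQ : IsDyadicCube Q)
    (r : ℝ) (hr1 : 1 < r)
    (ε : ℝ) (hε0 : 0 < ε) (hε1 : ε ≤ 1)
    (K : ℝ) (hK : 0 < K)
    (L : ((Fin d → ℝ) → ℝ) →ₗ[ℝ] ℝ)
    (hL : ∀ ρ : (Fin d → ℝ) → ℝ, IsDyadicTest ρ → Function.support ρ ⊆ Q →
      |L ρ| ≤ K * lpNormR r ρ)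
    (Pc : Set (Set (Fin d → ℝ)))
    (hPc_cube : ∀ P ∈ Pc, IsDyadicCube P ∧ P ⊆ Q)
    (hPc_disj : Pc.Pairwise fun A B => Disjoint A B)
    (hPc_test : ∀ P ∈ Pc, ∃ ρ : (Fin d → ℝ) → ℝ, ρ ≠ 0 ∧ IsDyadicTest ρ ∧
      Function.support ρ ⊆ P ∧ (∫ x, ρ x) = 0 ∧
      K * ε⁻¹ * (((volume P).toReal / (volume Q).toReal) ^ (1 - 1 / r)) * lpNormR r ρ ≤
        |L ρ|) :
    ∑' P : Pc, volume (P : Set (Fin d → ℝ)) ≤ ENNReal.ofReal ε * volume Q :=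
  stopping_time_dual_general d Q hQ r hr1 ε hε0 hε1 K hK L hL Pc hPc_cube hPc_disj hPc_test
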